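/- arXiv:1703.02141 — 2 statements merged into one kernel-verified Lean document; each statement's English description precedes it below -/
import Mathlib

section
/- Let p ∈ (1/2, 1) and q = 1 − p. For (ψ0, ψ1) ∈ [0,1]² define p̃ = (1−ψ0−ψ1)·p + ψ0 and q̃ = (1−ψ0−ψ1)·q + ψ0, and assume p̃ > 1/2 and q̃ < 1/2. Define H(x,y) = x·ln(x/y) + (1−x)·ln((1−x)/(1−y)) for x, y ∈ (0,1), and set λ̂0(ψ0,ψ1) = H(q,p)/H(q̃,p̃) − 1 and λ̂1(ψ0,ψ1) = H(p,q)/H(p̃,q̃) − 1. Then at every such point all four partial derivatives ∂λ̂0/∂ψ0, ∂λ̂0/∂ψ1, ∂λ̂1/∂ψ0, ∂λ̂1/∂ψ1 are strictly positive. -/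
/-!
Write `u = q̃ < v = p̃`. Since `λ̂ᵢ = C / H - 1` with `C > 0`, a partial derivative of `λ̂ᵢ` is
positive exactly when the corresponding derivative of `H(u, v)` (resp. `H(v, u)`) is negative;
moving `ψ₀` moves `(u, v)` in direction `(p, q)`, moving `ψ₁` in direction `-(q, p)`. These
derivatives are combinations of `ℓ = log (v / u) + log ((1 - u) / (1 - v))` and of the slopes
`(v - u) / (v (1 - v))`, `(v - u) / (u (1 - u))`. The bounds `(b - a) / b < log (b / a) < (b - a) / a`
put `ℓ` and both slopes between `lo = (v - u) (1/v + 1/(1-u))` and `hi = (v - u) (1/u + 1/(1-v))`,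
while flipping gives `q / u ≤ p / v` and `q / (1 - v) ≤ p / (1 - u)`, i.e. `q hi ≤ p lo`.
Hence `q · slope < p ℓ` and `q ℓ < p · slope`, which are the four sign conditions.
-/

open Real Set

noncomputable section

def binaryKL (x y : ℝ) : ℝ := x * log (x / y) + (1 - x) * log ((1 - x) / (1 - y))

def binaryKLDerivFst (x y : ℝ) : ℝ := log (x / y) - log ((1 - x) / (1 - y))

def binaryKLDerivSnd (x y : ℝ) : ℝ := (1 - x) / (1 - y) - x / y

/-- The probability of a `1` once a bit that is `1` with probability `c` is flipped `0 → 1` with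
probability `a` and `1 → 0` with probability `b`. -/
def flipProb (c a b : ℝ) : ℝ := (1 - a - b) * c + a

end

lemma sub_lt_mul_log_div {x y : ℝ} (hx : 0 < x) (hy : 0 < y) (hxy : x ≠ y) :
    x - y < x * log (x / y) := by
  have h := log_lt_sub_one_of_pos (div_pos hy hx) (by
    rwa [ne_eq, div_eq_one_iff_eq hx.ne', eq_comm])
  calc x - y = -(x * (y / x - 1)) := by field_simp; ring
    _ < -(x * log (y / x)) := neg_lt_neg (mul_lt_mul_of_pos_left h hx)
    _ = x * log (x / y) := by rw [← inv_div, log_inv]; ring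

lemma log_div_mem_Ioo {a b : ℝ} (ha : 0 < a) (hab : a < b) :
    log (b / a) ∈ Ioo ((b - a) / b) ((b - a) / a) := by
  have hb : 0 < b := ha.trans hab
  constructor
  · rw [div_lt_iff₀' hb]
    exact sub_lt_mul_log_div hb ha hab.ne'
  · have h := sub_lt_mul_log_div ha hb hab.ne
    rw [← inv_div, log_inv] at h
    rw [lt_div_iff₀' ha]
    linarith

lemma binaryKL_pos {x y : ℝ} (hx₀ : 0 < x) (hx₁ : x < 1) (hy₀ : 0 < y) (hy₁ : y < 1)
    (hxy : x ≠ y) : 0 < binaryKL x y := by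
  have h₁ := sub_lt_mul_log_div hx₀ hy₀ hxy
  have h₂ := sub_lt_mul_log_div (sub_pos.2 hx₁) (sub_pos.2 hy₁) (by contrapose! hxy; linarith)
  unfold binaryKL
  linarith

theorem HasDerivAt.binaryKL {f g : ℝ → ℝ} {f' g' t : ℝ} (hf : HasDerivAt f f' t)
    (hg : HasDerivAt g g' t) (hf₀ : 0 < f t) (hf₁ : f t < 1) (hg₀ : 0 < g t) (hg₁ : g t < 1) :
    HasDerivAt (fun s => _root_.binaryKL (f s) (g s))
      (f' * binaryKLDerivFst (f t) (g t) + g' * binaryKLDerivSnd (f t) (g t)) t := by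
  have hf₁' : 0 < 1 - f t := sub_pos.2 hf₁
  have hg₁' : 0 < 1 - g t := sub_pos.2 hg₁
  have h₁ := hf.mul ((hf.div hg hg₀.ne').log (div_pos hf₀ hg₀).ne')
  have h₂ := (hf.const_sub 1).mul
    (((hf.const_sub 1).div (hg.const_sub 1) hg₁'.ne').log (div_pos hf₁' hg₁').ne')
  refine (h₁.add h₂).congr_deriv ?_
  simp only [Pi.div_apply]
  unfold binaryKLDerivFst binaryKLDerivSnd
  field_simp
  ring

lemma exists_pos_hasDerivAt_const_div_binaryKL_sub_one {C : ℝ} (hC : 0 < C) {f g : ℝ → ℝ}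
    {f' g' t : ℝ} (hf : HasDerivAt f f' t) (hg : HasDerivAt g g' t) (hf₀ : 0 < f t)
    (hf₁ : f t < 1) (hg₀ : 0 < g t) (hg₁ : g t < 1) (hfg : f t ≠ g t)
    (hD : f' * binaryKLDerivFst (f t) (g t) + g' * binaryKLDerivSnd (f t) (g t) < 0) :
    ∃ d > 0, HasDerivAt (fun s => C / binaryKL (f s) (g s) - 1) d t := by
  have hH := binaryKL_pos hf₀ hf₁ hg₀ hg₁ hfg
  refine ⟨_, ?_, ((hasDerivAt_const t C).div (hf.binaryKL hg hf₀ hf₁ hg₀ hg₁) hH.ne').sub_const 1⟩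
  have : 0 < C * -(f' * binaryKLDerivFst (f t) (g t) + g' * binaryKLDerivSnd (f t) (g t)) :=
    mul_pos hC (neg_pos.2 hD)
  exact div_pos (by linarith) (pow_pos hH 2)

lemma mul_lt_mul_of_mem_Icc_of_mem_Ioo {p q lo hi L M : ℝ} (hq : 0 < q) (hp : 0 < p)
    (hL : L ∈ Ioo lo hi) (hM : M ∈ Icc lo hi) (h : q * hi ≤ p * lo) :
    q * M < p * L ∧ q * L < p * M :=
  ⟨calc q * M ≤ q * hi := mul_le_mul_of_nonneg_left hM.2 hq.le
      _ ≤ p * lo := h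
      _ < p * L := mul_lt_mul_of_pos_left hL.1 hp,
    calc q * L < q * hi := mul_lt_mul_of_pos_left hL.2 hq
      _ ≤ p * lo := h
      _ ≤ p * M := mul_le_mul_of_nonneg_left hM.1 hp.le⟩

lemma binaryKLDeriv_combinations_neg {p q u v : ℝ} (hq : 0 < q) (hu : 0 < u) (huv : u < v)
    (hv : v < 1) (h₀ : q * v ≤ p * u) (h₁ : q * (1 - u) ≤ p * (1 - v)) :
    p * binaryKLDerivFst u v + q * binaryKLDerivSnd u v < 0 ∧
      -q * binaryKLDerivFst u v + -p * binaryKLDerivSnd u v < 0 ∧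
      q * binaryKLDerivFst v u + p * binaryKLDerivSnd v u < 0 ∧
      -p * binaryKLDerivFst v u + -q * binaryKLDerivSnd v u < 0 := by
  have hv₀ : 0 < v := hu.trans huv
  have hu₁ : 0 < 1 - u := by linarith
  have hv₁ : 0 < 1 - v := by linarith
  have hw : 0 ≤ v - u := by linarith
  have hp : 0 < p := pos_of_mul_pos_left (h₀.trans_lt' (mul_pos hq hv₀)) hu.le
  set L := log (v / u) + log ((1 - u) / (1 - v))
  set lo := (v - u) / v + (v - u) / (1 - u)
  set hi := (v - u) / u + (v - u) / (1 - v)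
  have hL : L ∈ Ioo lo hi := by
    have h₁ := log_div_mem_Ioo hu huv
    have h₂ := log_div_mem_Ioo hv₁ (by linarith : 1 - v < 1 - u)
    simp only [sub_sub_sub_cancel_left] at h₂
    exact ⟨add_lt_add h₁.1 h₂.1, add_lt_add h₁.2 h₂.2⟩
  have hu_le := div_le_div_of_nonneg_left hw hu huv.le
  have hv_le := div_le_div_of_nonneg_left hw hv₁ (by linarith : 1 - v ≤ 1 - u)
  have hA : (v - u) / v + (v - u) / (1 - v) ∈ Icc lo hi := ⟨by linarith, by linarith⟩
  have hB : (v - u) / u + (v - u) / (1 - u) ∈ Icc lo hi := ⟨by linarith, by linarith⟩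
  have hqp : q * hi ≤ p * lo := by
    have k₀ : q / u ≤ p / v := by rw [div_le_div_iff₀ hu hv₀]; exact h₀
    have k₁ : q / (1 - v) ≤ p / (1 - u) := by rw [div_le_div_iff₀ hv₁ hu₁]; exact h₁
    calc q * hi = (v - u) * (q / u + q / (1 - v)) := by ring
      _ ≤ (v - u) * (p / v + p / (1 - u)) := by gcongr
      _ = p * lo := by ring
  obtain ⟨hA₁, hA₂⟩ := mul_lt_mul_of_mem_Icc_of_mem_Ioo hq hp hL hA hqp
  obtain ⟨hB₁, hB₂⟩ := mul_lt_mul_of_mem_Icc_of_mem_Ioo hq hp hL hB hqp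
  have eFst : binaryKLDerivFst v u = L := by
    unfold binaryKLDerivFst
    rw [← inv_div (1 - u), log_inv]
    ring
  have eFst' : binaryKLDerivFst u v = -L := by
    unfold binaryKLDerivFst
    rw [← inv_div v, log_inv]
    ring
  have eSnd : binaryKLDerivSnd u v = (v - u) / v + (v - u) / (1 - v) := by
    unfold binaryKLDerivSnd
    field_simp
    ring
  have eSnd' : binaryKLDerivSnd v u = -((v - u) / u + (v - u) / (1 - u)) := by
    unfold binaryKLDerivSnd
    field_simp
    ring
  rw [eFst, eFst', eSnd, eSnd']
  refine ⟨?_, ?_, ?_, ?_⟩ <;> linarith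

lemma flipProb_pos {c a b : ℝ} (hc : 0 < c) (ha : 0 ≤ a) (hab : 0 < 1 - a - b) :
    0 < flipProb c a b :=
  add_pos_of_pos_of_nonneg (mul_pos hab hc) ha

lemma one_sub_flipProb (c a b : ℝ) : 1 - flipProb c a b = flipProb (1 - c) b a := by
  unfold flipProb
  ring

lemma mul_flipProb_le_mul_flipProb {p q a : ℝ} (hqp : q ≤ p) (ha : 0 ≤ a) (b : ℝ) :
    q * flipProb p a b ≤ p * flipProb q a b := by
  have : 0 ≤ (p - q) * a := mul_nonneg (sub_nonneg.2 hqp) ha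
  unfold flipProb
  linarith

lemma mul_one_sub_flipProb_le_mul_one_sub_flipProb {p q b : ℝ} (hpq : p + q = 1) (hqp : q ≤ p)
    (hb : 0 ≤ b) (a : ℝ) : q * (1 - flipProb q a b) ≤ p * (1 - flipProb p a b) := by
  rw [one_sub_flipProb, one_sub_flipProb, show 1 - q = p by linarith, show 1 - p = q by linarith]
  exact mul_flipProb_le_mul_flipProb hqp hb a

lemma hasDerivAt_flipProb_fst (c b a : ℝ) : HasDerivAt (fun a => flipProb c a b) (1 - c) a := by
  refine ((((hasDerivAt_id' a).const_sub 1).sub_const b |>.mul_const c).add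
    (hasDerivAt_id' a)).congr_deriv ?_
  ring

lemma hasDerivAt_flipProb_snd (c a b : ℝ) : HasDerivAt (fun b => flipProb c a b) (-c) b := by
  refine (((hasDerivAt_id' b).const_sub (1 - a) |>.mul_const c).add_const a).congr_deriv ?_
  ring

/-- Part 1 of Lemma 1 of the paper: the asymptotic relative increases `λ̂₀`, `λ̂₁` of
the legitimate fusion center's expected sample size caused by a stochastic encryption
`(ψ0, ψ1)` have strictly positive partial derivatives in both flip probabilities. -/
theorem stmt_13 (p : ℝ) (hp : 1 / 2 < p) (hp1 : p < 1) (q : ℝ) (hq : q = 1 - p)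
    (H : ℝ → ℝ → ℝ)
    (hH : ∀ x y, H x y = x * Real.log (x / y) + (1 - x) * Real.log ((1 - x) / (1 - y)))
    (ptf qtf : ℝ → ℝ → ℝ)
    (hptf : ∀ x y, ptf x y = (1 - x - y) * p + x)
    (hqtf : ∀ x y, qtf x y = (1 - x - y) * q + x)
    (lam0 lam1 : ℝ → ℝ → ℝ)
    (hl0 : ∀ x y, lam0 x y = H q p / H (qtf x y) (ptf x y) - 1)
    (hl1 : ∀ x y, lam1 x y = H p q / H (ptf x y) (qtf x y) - 1) :
    ∀ ψ0 ψ1 : ℝ, ψ0 ∈ Set.Icc (0 : ℝ) 1 → ψ1 ∈ Set.Icc (0 : ℝ) 1 →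
      1 / 2 < ptf ψ0 ψ1 → qtf ψ0 ψ1 < 1 / 2 →
      (∃ d > (0 : ℝ), HasDerivAt (fun x => lam0 x ψ1) d ψ0) ∧
      (∃ d > (0 : ℝ), HasDerivAt (fun y => lam0 ψ0 y) d ψ1) ∧
      (∃ d > (0 : ℝ), HasDerivAt (fun x => lam1 x ψ1) d ψ0) ∧
      (∃ d > (0 : ℝ), HasDerivAt (fun y => lam1 ψ0 y) d ψ1) := by
  intro ψ0 ψ1 hψ0 hψ1 hv hu
  obtain rfl : H = binaryKL := funext₂ hH
  obtain rfl : ptf = flipProb p := funext₂ hptf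
  obtain rfl : qtf = flipProb q := funext₂ hqtf
  have hq₀ : 0 < q := by linarith
  have hqp : q < p := by linarith
  have hs : 0 < 1 - ψ0 - ψ1 := by unfold flipProb at hu hv; nlinarith
  have hu₀ : 0 < flipProb q ψ0 ψ1 := flipProb_pos hq₀ hψ0.1 hs
  have hv₁ : flipProb p ψ0 ψ1 < 1 := by
    rw [← sub_pos, one_sub_flipProb, ← hq]
    exact flipProb_pos hq₀ hψ1.1 (by linarith)
  have huv : flipProb q ψ0 ψ1 < flipProb p ψ0 ψ1 := by linarith
  obtain ⟨h₀₀, h₀₁, h₁₀, h₁₁⟩ := binaryKLDeriv_combinations_neg hq₀ hu₀ huv hv₁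
    (mul_flipProb_le_mul_flipProb hqp.le hψ0.1 ψ1)
    (mul_one_sub_flipProb_le_mul_one_sub_flipProb (by linarith) hqp.le hψ1.1 ψ0)
  have dq₀ : HasDerivAt (fun x => flipProb q x ψ1) p ψ0 :=
    (hasDerivAt_flipProb_fst q ψ1 ψ0).congr_deriv (by linarith)
  have dp₀ : HasDerivAt (fun x => flipProb p x ψ1) q ψ0 :=
    (hasDerivAt_flipProb_fst p ψ1 ψ0).congr_deriv (by linarith)
  have dq₁ := hasDerivAt_flipProb_snd q ψ0 ψ1
  have dp₁ := hasDerivAt_flipProb_snd p ψ0 ψ1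
  have hC₀ : 0 < binaryKL q p := binaryKL_pos hq₀ (by linarith) (by linarith) hp1 hqp.ne
  have hC₁ : 0 < binaryKL p q := binaryKL_pos (by linarith) hp1 hq₀ (by linarith) hqp.ne'
  have hu₁ := huv.trans hv₁
  have hv₀ := hu₀.trans huv
  simp only [hl0, hl1]
  exact ⟨exists_pos_hasDerivAt_const_div_binaryKL_sub_one hC₀ dq₀ dp₀ hu₀ hu₁ hv₀ hv₁ huv.ne h₀₀,
    exists_pos_hasDerivAt_const_div_binaryKL_sub_one hC₀ dq₁ dp₁ hu₀ hu₁ hv₀ hv₁ huv.ne h₀₁,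
    exists_pos_hasDerivAt_const_div_binaryKL_sub_one hC₁ dp₀ dq₀ hv₀ hv₁ hu₀ hu₁ huv.ne' h₁₀,
    exists_pos_hasDerivAt_const_div_binaryKL_sub_one hC₁ dp₁ dq₁ hv₀ hv₁ hu₀ hu₁ huv.ne' h₁₁⟩
end

section
/- Let p ∈ (1/2, 1), q = 1 − p, and α*, β* ∈ (0,1). For (ψ0, ψ1) ∈ [0,1]² define p̃ = (1−ψ0−ψ1)·p + ψ0, q̃ = (1−ψ0−ψ1)·q + ψ0, H(x,y) = x·ln(x/y) + (1−x)·ln((1−x)/(1−y)), and the functions g0(ψ0,ψ1) = ln(1/β*)·[1/((1−2q̃)·ln(p̃/(1−p̃))) − 1/H(q̃,p̃)] and g1(ψ0,ψ1) = ln(1/α*)·[1/((2p̃−1)·ln((1−q̃)/q̃)) − 1/H(p̃,q̃)]. Then there exists ε > 0 such that: (i) for all (ψ0, ψ1) with 0 ≤ ψ0 < ψ1 < ε, both ∂g_i/∂ψ0 < 0 and ∂g_i/∂ψ1 > 0 for i = 0, 1; and (ii) for all (ψ0, ψ1) with 0 ≤ ψ1 < ψ0 < ε, both ∂g_i/∂ψ0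 > 0 and ∂g_i/∂ψ1 < 0 for i = 0, 1. -/
/-!
Write `u = p̃`, `v = q̃` and `w = u + v - 1`; then `w = ψ0 - ψ1`. Up to a positive factor
`g0 = 1/A - 1/B` with `A = (1 - 2v)·logit u` and `B = H(v, u)`, and `g1` is the same expression
with `ψ0` and `ψ1` exchanged. The two denominators agree on the line `w = 0`: in general
`B - A = H(v, 1 - u) = O(w²)`. Along a direction `(a, b)` with `a, b ≥ 0`, `a + b = 1`, the
derivative of `1/A - 1/B` has numerator `(B' - A')·B² - (B - A)·B'·(A + B)`, and
`(B' - A')·w ≥ 2w²` because `logit` is increasing with slope at least `2`, while the second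
term is `O(|w|³)`. Hence near the origin every partial derivative has the sign of `±w`.
-/

open Real

noncomputable section

def logit (t : ℝ) : ℝ := log (t / (1 - t))

def binKL (x y : ℝ) : ℝ := x * log (x / y) + (1 - x) * log ((1 - x) / (1 - y))

/-- `p̃ = encryptedProb p ψ0 ψ1` and `q̃ = encryptedProb q ψ0 ψ1`. -/
def encryptedProb (c ψ0 ψ1 : ℝ) : ℝ := (1 - ψ0 - ψ1) * c + ψ0

/-- `g0 = log (1/β*) · sprtGap p̃ q̃` and `g1 = log (1/α*) · sprtGap (1 - q̃) (1 - p̃)`. -/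
def sprtGap (u v : ℝ) : ℝ := ((1 - 2 * v) * logit u)⁻¹ - (binKL v u)⁻¹

def sprtGapSlope (u v u' v' : ℝ) : ℝ :=
  (v' * (logit v - logit u) + u' * ((1 - v) / (1 - u) - v / u)) / binKL v u ^ 2
    - (-(2 * v') * logit u + (1 - 2 * v) * (u' / (u * (1 - u)))) / ((1 - 2 * v) * logit u) ^ 2

end

lemma sub_div_le_log_div {x y : ℝ} (hx : 0 < x) (hy : 0 < y) : (x - y) / x ≤ log (x / y) := by
  have h := one_sub_inv_le_log_of_pos (div_pos hx hy)
  rwa [inv_div, one_sub_div hx.ne'] at h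

lemma logit_one_sub (t : ℝ) : logit (1 - t) = -logit t := by
  rw [logit, logit, sub_sub_cancel, ← log_inv, inv_div]

lemma logit_sub_logit {x y : ℝ} (hx0 : 0 < x) (hx1 : x < 1) (hy0 : 0 < y) (hy1 : y < 1) :
    logit x - logit y = log (x / y) + log ((1 - y) / (1 - x)) := by
  have : 0 < 1 - x := by linarith
  have : 0 < 1 - y := by linarith
  rw [logit, logit, ← log_div (by positivity) (by positivity),
    ← log_mul (by positivity) (by positivity)]
  congr 1
  field_simp

lemma two_mul_sub_le_logit_sub_logit {x y : ℝ} (hy0 : 0 < y) (hyx : y ≤ x) (hx1 : x < 1) :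
    2 * (x - y) ≤ logit x - logit y := by
  have h1 := sub_div_le_log_div (hy0.trans_le hyx) hy0
  have h2 := sub_div_le_log_div (show 0 < 1 - y by linarith) (show 0 < 1 - x by linarith)
  have h3 : x - y ≤ (x - y) / x := le_div_self (by linarith) (by linarith) (by linarith)
  have h4 : x - y ≤ (1 - y - (1 - x)) / (1 - y) := by
    rw [show 1 - y - (1 - x) = x - y by ring]
    exact le_div_self (by linarith) (by linarith) (by linarith)
  rw [logit_sub_logit (hy0.trans_le hyx) hx1 hy0 (hyx.trans_lt hx1)]
  linarith

lemma two_mul_sq_le_mul_logit_sub_logit {x y : ℝ} (hx0 : 0 < x) (hx1 : x < 1) (hy0 : 0 < y)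
    (hy1 : y < 1) : 2 * (x - y) ^ 2 ≤ (x - y) * (logit x - logit y) := by
  rcases le_total y x with h | h
  · nlinarith [two_mul_sub_le_logit_sub_logit hy0 h hx1]
  · nlinarith [two_mul_sub_le_logit_sub_logit hx0 h hy1]

lemma logit_le_inv {r t : ℝ} (hr : 0 < r) (ht : 0 < t) (hrt : r ≤ 1 - t) :
    logit t ≤ 1 / r := by
  have h1t : 0 < 1 - t := hr.trans_le hrt
  calc logit t ≤ t / (1 - t) - 1 := log_le_sub_one_of_pos (div_pos ht h1t)
    _ ≤ 1 / (1 - t) := by rw [div_sub_one h1t.ne']; gcongr; linarith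
    _ ≤ 1 / r := by gcongr

lemma abs_logit_le {r t : ℝ} (hr : 0 < r) (hrt : r ≤ t) (htr : t ≤ 1 - r) :
    |logit t| ≤ 1 / r := by
  have h1 := logit_le_inv hr (hr.trans_le hrt) (by linarith)
  have h2 := logit_le_inv hr (show 0 < 1 - t by linarith) (by linarith)
  rw [logit_one_sub] at h2
  exact abs_le.2 ⟨by linarith, h1⟩

lemma binKL_one_sub (x y : ℝ) : binKL (1 - x) (1 - y) = binKL x y := by
  rw [binKL, binKL, sub_sub_cancel, sub_sub_cancel, add_comm]

lemma binKL_nonneg {x y : ℝ} (hx0 : 0 < x) (hx1 : x < 1) (hy0 : 0 < y) (hy1 : y < 1) :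
    0 ≤ binKL x y := by
  have h1 := mul_le_mul_of_nonneg_left (sub_div_le_log_div hx0 hy0) hx0.le
  have h2 := mul_le_mul_of_nonneg_left
    (sub_div_le_log_div (show 0 < 1 - x by linarith) (show 0 < 1 - y by linarith))
    (show 0 ≤ 1 - x by linarith)
  rw [mul_div_cancel₀ _ hx0.ne'] at h1
  rw [mul_div_cancel₀ _ (show 1 - x ≠ 0 by linarith)] at h2
  rw [binKL]
  linarith

lemma binKL_le {x y : ℝ} (hx0 : 0 < x) (hx1 : x < 1) (hy0 : 0 < y) (hy1 : y < 1) :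
    binKL x y ≤ (x - y) ^ 2 / (y * (1 - y)) := by
  have h1 := mul_le_mul_of_nonneg_left (log_le_sub_one_of_pos (div_pos hx0 hy0)) hx0.le
  have h2 := mul_le_mul_of_nonneg_left
    (log_le_sub_one_of_pos (show 0 < (1 - x) / (1 - y) from div_pos (by linarith) (by linarith)))
    (show 0 ≤ 1 - x by linarith)
  have : x * (x / y - 1) + (1 - x) * ((1 - x) / (1 - y) - 1) = (x - y) ^ 2 / (y * (1 - y)) := by
    field_simp [show 1 - y ≠ 0 by linarith]
    ring
  rw [binKL]
  linarith

lemma binKL_sub_mul_logit {u v : ℝ} (hu0 : 0 < u) (hu1 : u < 1) (hv0 : 0 < v) (hv1 : v < 1) :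
    binKL v u - (1 - 2 * v) * logit u = binKL v (1 - u) := by
  have h1u : (1 : ℝ) - u ≠ 0 := by linarith
  have h1v : (1 : ℝ) - v ≠ 0 := by linarith
  simp only [binKL, logit, sub_sub_cancel]
  rw [log_div hv0.ne' hu0.ne', log_div hv0.ne' h1u, log_div h1v hu0.ne', log_div h1v h1u,
    log_div hu0.ne' h1u]
  ring

section Derivatives

variable {u v : ℝ → ℝ} {u' v' t : ℝ}

lemma HasDerivAt.logit (hu : HasDerivAt u u' t) (hu0 : 0 < u t) (hu1 : u t < 1) :
    HasDerivAt (fun s => _root_.logit (u s)) (u' / (u t * (1 - u t))) t := by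
  have h1u : 1 - u t ≠ 0 := by linarith
  have hdiv : HasDerivAt (fun s => u s / (1 - u s)) _ t := hu.div (hu.const_sub 1) h1u
  refine (hdiv.log (div_pos hu0 (by linarith)).ne').congr_deriv ?_
  field_simp
  ring

lemma HasDerivAt.binKL (hu : HasDerivAt u u' t) (hv : HasDerivAt v v' t) (hu0 : 0 < u t)
    (hu1 : u t < 1) (hv0 : 0 < v t) (hv1 : v t < 1) :
    HasDerivAt (fun s => _root_.binKL (v s) (u s))
      (v' * (_root_.logit (v t) - _root_.logit (u t))
        + u' * ((1 - v t) / (1 - u t) - v t / u t)) t := by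
  have h1u : 1 - u t ≠ 0 := by linarith
  have h1v : 1 - v t ≠ 0 := by linarith
  have hdiv1 : HasDerivAt (fun s => v s / u s) _ t := hv.div hu hu0.ne'
  have hdiv2 : HasDerivAt (fun s => (1 - v s) / (1 - u s)) _ t :=
    (hv.const_sub 1).div (hu.const_sub 1) h1u
  have hlog1 := hdiv1.log (div_pos hv0 hu0).ne'
  have hlog2 := hdiv2.log (div_pos (by linarith) (by linarith)).ne'
  refine ((hv.mul hlog1).add ((hv.const_sub 1).mul hlog2)).congr_deriv ?_
  simp only [_root_.logit]
  rw [log_div hv0.ne' hu0.ne', log_div hv0.ne' h1v, log_div h1v h1u, log_div hu0.ne' h1u]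
  field_simp
  ring

lemma HasDerivAt.sprtGap (hu : HasDerivAt u u' t) (hv : HasDerivAt v v' t) (hu0 : 0 < u t)
    (hu1 : u t < 1) (hv0 : 0 < v t) (hv1 : v t < 1)
    (hA : (1 - 2 * v t) * _root_.logit (u t) ≠ 0) (hB : _root_.binKL (v t) (u t) ≠ 0) :
    HasDerivAt (fun s => _root_.sprtGap (u s) (v s)) (sprtGapSlope (u t) (v t) u' v') t := by
  have hdA : HasDerivAt (fun s => (1 - 2 * v s) * _root_.logit (u s)) _ t :=
    ((hv.const_mul 2).const_sub 1).mul (hu.logit hu0 hu1)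
  refine (hdA.inv hA).sub ((hu.binKL hv hu0 hu1 hv0 hv1).inv hB) |>.congr_deriv ?_
  rw [sprtGapSlope]
  ring

end Derivatives

lemma sprtGapSlope_neg (u v u' v' : ℝ) :
    sprtGapSlope u v (-u') (-v') = -sprtGapSlope u v u' v' := by
  simp only [sprtGapSlope]
  ring

lemma div_sq_sub_div_sq_mul_pos {A B A' B' w m K : ℝ} (hm : 0 < m) (hmA : m ≤ A) (hAB : A ≤ B)
    (hBA : B - A ≤ K * w ^ 2) (hAB' : A + B ≤ K) (hBc : |B'| ≤ K) (hw : w ≠ 0)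
    (hsmall : |w| * K ^ 3 < 2 * m ^ 2) (hslope : 2 * w ^ 2 ≤ (B' - A') * w) :
    0 < (B' / B ^ 2 - A' / A ^ 2) * w := by
  have hA : 0 < A := hm.trans_le hmA
  have hB : 0 < B := hA.trans_le hAB
  have hw2 : 0 < w ^ 2 := by positivity
  have hK : 0 ≤ K := (abs_nonneg _).trans hBc
  rw [show (B' / B ^ 2 - A' / A ^ 2) * w
      = ((B' - A') * w * B ^ 2 - (B - A) * (A + B) * (B' * w)) / (A ^ 2 * B ^ 2) by
    field_simp; ring]
  refine div_pos ?_ (by positivity)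
  have hmain : 2 * w ^ 2 * m ^ 2 ≤ (B' - A') * w * B ^ 2 :=
    mul_le_mul hslope (pow_le_pow_left₀ hm.le (hmA.trans hAB) 2) (by positivity)
      (by linarith)
  have herr : (B - A) * (A + B) * (B' * w) ≤ K * w ^ 2 * K * (K * |w|) := by
    calc (B - A) * (A + B) * (B' * w) ≤ (B - A) * (A + B) * (|B'| * |w|) := by
          rw [← abs_mul]
          exact mul_le_mul_of_nonneg_left (le_abs_self _) (by nlinarith)
      _ ≤ K * w ^ 2 * K * (K * |w|) := by gcongr
  nlinarith [mul_lt_mul_of_pos_left hsmall hw2]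

lemma four_mul_sq_le_mul_logit {r u v : ℝ} (hr : 0 < r) (hu : 1 / 2 + r ≤ u) (hu1 : u < 1)
    (hv : v ≤ 1 / 2 - r) : 4 * r ^ 2 ≤ (1 - 2 * v) * logit u := by
  have h := two_mul_sub_le_logit_sub_logit (by norm_num : (0 : ℝ) < 1 / 2) (by linarith) hu1
  rw [show logit (1 / 2) = 0 by norm_num [logit]] at h
  nlinarith

lemma mul_logit_le_binKL {u v : ℝ} (hu0 : 0 < u) (hu1 : u < 1) (hv0 : 0 < v) (hv1 : v < 1) :
    (1 - 2 * v) * logit u ≤ binKL v u := by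
  have := binKL_sub_mul_logit hu0 hu1 hv0 hv1
  have := binKL_nonneg hv0 hv1 (sub_pos.2 hu1) (sub_lt_self 1 hu0)
  linarith

lemma binKL_sub_mul_logit_le {r u v : ℝ} (hr : 0 < r) (hu : 1 / 2 ≤ u) (hu1 : u ≤ 1 - r)
    (hv0 : 0 < v) (hv1 : v < 1) :
    binKL v u - (1 - 2 * v) * logit u ≤ 2 / r * (u + v - 1) ^ 2 := by
  have hvar : r / 2 ≤ (1 - u) * u := by nlinarith
  rw [binKL_sub_mul_logit (by linarith) (by linarith) hv0 hv1]
  calc binKL v (1 - u) ≤ (v - (1 - u)) ^ 2 / ((1 - u) * (1 - (1 - u))) :=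
        binKL_le hv0 hv1 (by linarith) (by linarith)
    _ ≤ (u + v - 1) ^ 2 / (r / 2) := by
        rw [sub_sub_cancel, show v - (1 - u) = u + v - 1 by ring]
        exact div_le_div_of_nonneg_left (sq_nonneg _) (by positivity) hvar
    _ = 2 / r * (u + v - 1) ^ 2 := by ring

lemma abs_slope_binKL_le {r u v a b : ℝ} (hr : 0 < r) (hv : r ≤ v) (hvu : v ≤ u)
    (hu : u ≤ 1 - r) (ha : 0 ≤ a) (hb : 0 ≤ b) (hab : a + b = 1) :
    |b * (logit v - logit u) + a * ((1 - v) / (1 - u) - v / u)| ≤ 2 / r := by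
  have hu0 : 0 < u := by linarith
  have h2r : 2 / r = 1 / r + 1 / r := by ring
  have hlogit : |logit v - logit u| ≤ 2 / r := by
    have := abs_sub (logit v) (logit u)
    linarith [abs_logit_le hr hv (by linarith), abs_logit_le hr (by linarith) hu]
  have hratio : |(1 - v) / (1 - u) - v / u| ≤ 2 / r := by
    have h1 : (1 - v) / (1 - u) ≤ 1 / r :=
      div_le_div₀ zero_le_one (by linarith) hr (by linarith)
    have h2 : v / u ≤ 1 := (div_le_one hu0).2 hvu
    have h3 : 1 ≤ 1 / r := by rw [le_div_iff₀ hr]; linarith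
    have h4 : 0 ≤ (1 - v) / (1 - u) := div_nonneg (by linarith) (by linarith)
    have h5 : 0 ≤ v / u := div_nonneg (by linarith) hu0.le
    rw [abs_le]; constructor <;> linarith
  calc _ ≤ b * |logit v - logit u| + a * |(1 - v) / (1 - u) - v / u| := by
        refine (abs_add_le _ _).trans_eq ?_
        rw [abs_mul, abs_mul, abs_of_nonneg ha, abs_of_nonneg hb]
    _ ≤ b * (2 / r) + a * (2 / r) := by gcongr
    _ = 2 / r := by rw [← add_mul, add_comm b a, hab, one_mul]

lemma two_mul_sq_le_slope_sub_mul {u v a b : ℝ} (hu0 : 0 < u) (hu1 : u < 1) (hv0 : 0 < v)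
    (hv1 : v < 1) (ha : 0 ≤ a) (hb : 0 ≤ b) (hab : a + b = 1) :
    2 * (u + v - 1) ^ 2 ≤ (b * (logit v - logit u) + a * ((1 - v) / (1 - u) - v / u)
      - (-(2 * b) * logit u + (1 - 2 * v) * (a / (u * (1 - u))))) * (u + v - 1) := by
  set w := u + v - 1
  have hL := two_mul_sq_le_mul_logit_sub_logit hv0 hv1 (sub_pos.2 hu1) (sub_lt_self 1 hu0)
  rw [logit_one_sub, show v - (1 - u) = w by ring] at hL
  have hU : 2 * w ^ 2 ≤ w / (u * (1 - u)) * w := by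
    rw [div_mul_eq_mul_div, le_div_iff₀ (by nlinarith)]
    nlinarith [sq_nonneg w, sq_nonneg (u - 1 / 2)]
  have hid : (b * (logit v - logit u) + a * ((1 - v) / (1 - u) - v / u)
      - (-(2 * b) * logit u + (1 - 2 * v) * (a / (u * (1 - u))))) * w
      = b * (w * (logit v - -logit u)) + a * (w / (u * (1 - u)) * w) := by
    field_simp [show 1 - u ≠ 0 by linarith]
    ring
  have hsplit : 2 * w ^ 2 = b * (2 * w ^ 2) + a * (2 * w ^ 2) := by
    rw [← add_mul, add_comm b a, hab, one_mul]
  rw [hid, hsplit]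
  exact add_le_add (mul_le_mul_of_nonneg_left hL hb) (mul_le_mul_of_nonneg_left hU ha)

lemma sprtGapSlope_mul_pos {r u v a b : ℝ} (hr : 0 < r) (hu : 1 / 2 + r ≤ u) (hu1 : u ≤ 1 - r)
    (hv : r ≤ v) (hv1 : v ≤ 1 / 2 - r) (hw : u + v - 1 ≠ 0) (hsmall : |u + v - 1| < r ^ 7 / 2)
    (ha : 0 ≤ a) (hb : 0 ≤ b) (hab : a + b = 1) :
    0 < sprtGapSlope u v a b * (u + v - 1) := by
  have hu0 : 0 < u := by linarith
  have hv0 : 0 < v := hr.trans_le hv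
  have hr7 : r ^ 7 ≤ 1 := pow_le_one₀ hr.le (by linarith)
  have hw1 : (u + v - 1) ^ 2 ≤ 1 := by
    rw [← sq_abs]; exact pow_le_one₀ (abs_nonneg _) (by linarith)
  have hA_le : (1 - 2 * v) * logit u ≤ 1 / r := by
    nlinarith [abs_le.1 (abs_logit_le hr (by linarith) hu1)]
  have hBA := binKL_sub_mul_logit_le hr (by linarith) hu1 hv0 (by linarith)
  have hBA' : 2 / r * (u + v - 1) ^ 2 ≤ 2 / r := by nlinarith [show 0 < 2 / r by positivity]
  rw [sprtGapSlope]
  -- With `m = 4r²` and `K = 4/r` the smallness condition `|w|·K³ < 2m²` reads `|w| < r⁷/2`.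
  refine div_sq_sub_div_sq_mul_pos (K := 4 / r) (by positivity)
    (four_mul_sq_le_mul_logit hr hu (by linarith) hv1)
    (mul_logit_le_binKL hu0 (by linarith) hv0 (by linarith)) (hBA.trans (by gcongr; norm_num))
    (by linarith [show 4 / r = 2 * (1 / r) + 2 / r by ring])
    ((abs_slope_binKL_le hr hv (by linarith) hu1 ha hb hab).trans (by gcongr; norm_num)) hw ?_
    (two_mul_sq_le_slope_sub_mul hu0 (by linarith) hv0 (by linarith) ha hb hab)
  rw [div_pow, mul_div_assoc', div_lt_iff₀ (by positivity)]
  nlinarith [pow_pos hr 3]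

lemma encryptedProb_swap (c x y : ℝ) : encryptedProb c y x = 1 - encryptedProb (1 - c) x y := by
  simp only [encryptedProb]
  ring

lemma hasDerivAt_encryptedProb_left (c y x : ℝ) :
    HasDerivAt (fun s => encryptedProb c s y) (1 - c) x :=
  ((((hasDerivAt_id' x).const_sub 1).sub_const y).mul_const c |>.add (hasDerivAt_id' x)).congr_deriv
    (by ring)

lemma hasDerivAt_encryptedProb_right (c x y : ℝ) :
    HasDerivAt (fun s => encryptedProb c x s) (-c) y :=
  (((hasDerivAt_id' y).const_sub (1 - x)).mul_const c |>.add_const x).congr_deriv (by ring)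

lemma exists_sprtGap_encryptedProb_partials {p : ℝ} (hp : 1 / 2 < p) (hp1 : p < 1) :
    ∃ ε > 0, ∀ x y : ℝ, 0 ≤ x → 0 ≤ y → x ≠ y → x < ε → y < ε →
      (∃ d, HasDerivAt (fun s => sprtGap (encryptedProb p s y) (encryptedProb (1 - p) s y)) d x
        ∧ 0 < d * (x - y)) ∧
      (∃ d, HasDerivAt (fun s => sprtGap (encryptedProb p x s) (encryptedProb (1 - p) x s)) d y
        ∧ 0 < d * (y - x)) := by
  obtain ⟨r, hr, hrp, hrq⟩ : ∃ r > 0, 2 * r ≤ p - 1 / 2 ∧ 2 * r ≤ 1 - p :=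
    ⟨min (p - 1 / 2) (1 - p) / 2, by positivity, by linarith [min_le_left (p - 1 / 2) (1 - p)],
      by linarith [min_le_right (p - 1 / 2) (1 - p)]⟩
  have hr7 : r ^ 7 / 2 ≤ r := by
    have : r ^ 6 ≤ 1 := pow_le_one₀ hr.le (by linarith)
    nlinarith [pow_succ r 6]
  refine ⟨r ^ 7 / 2, by positivity, fun x y hx hy hxy hxε hyε => ?_⟩
  obtain ⟨u, hu_def⟩ : ∃ u, u = encryptedProb p x y := ⟨_, rfl⟩
  obtain ⟨v, hv_def⟩ : ∃ v, v = encryptedProb (1 - p) x y := ⟨_, rfl⟩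
  simp only [encryptedProb] at hu_def hv_def
  have hu : 1 / 2 + r ≤ u := by nlinarith
  have hu1 : u ≤ 1 - r := by nlinarith
  have hv : r ≤ v := by nlinarith
  have hv1 : v ≤ 1 / 2 - r := by nlinarith
  have hw : u + v - 1 = x - y := by rw [hu_def, hv_def]; ring
  have hsmall : |u + v - 1| < r ^ 7 / 2 := by rw [hw, abs_lt]; constructor <;> linarith
  have hA := four_mul_sq_le_mul_logit hr hu (by linarith) hv1
  have hB := mul_logit_le_binKL (u := u) (v := v) (by linarith) (by linarith) (by linarith)
    (by linarith)
  have hgap {u' v' t : ℝ} {U V : ℝ → ℝ} (hU : HasDerivAt U u' t) (hV : HasDerivAt V v' t)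
      (hUt : U t = u) (hVt : V t = v) :
      HasDerivAt (fun s => sprtGap (U s) (V s)) (sprtGapSlope u v u' v') t := by
    subst hUt hVt
    exact hU.sprtGap hV (by linarith) (by linarith) (by linarith) (by linarith)
      (lt_of_lt_of_le (by positivity) hA).ne' (lt_of_lt_of_le (by positivity) (hA.trans hB)).ne'
  refine ⟨⟨_, hgap (hasDerivAt_encryptedProb_left p y x)
      (hasDerivAt_encryptedProb_left (1 - p) y x) hu_def.symm hv_def.symm, ?_⟩,
    ⟨_, hgap (hasDerivAt_encryptedProb_right p x y)
      (hasDerivAt_encryptedProb_right (1 - p) x y) hu_def.symm hv_def.symm, ?_⟩⟩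
  · rw [sub_sub_cancel, ← hw]
    exact sprtGapSlope_mul_pos hr hu hu1 hv hv1 (by rw [hw]; exact sub_ne_zero.2 hxy) hsmall
      (by linarith) (by linarith) (by ring)
  · rw [sprtGapSlope_neg, show y - x = -(x - y) by ring, neg_mul_neg, ← hw]
    exact sprtGapSlope_mul_pos hr hu hu1 hv hv1 (by rw [hw]; exact sub_ne_zero.2 hxy) hsmall
      (by linarith) (by linarith) (by ring)

section SignOfDerivative

variable {f : ℝ → ℝ} {x a C : ℝ}

lemma exists_neg_hasDerivAt_const_mul (hC : 0 < C) (h : ∃ d, HasDerivAt f d x ∧ 0 < d * a)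
    (ha : a < 0) : ∃ d < 0, HasDerivAt (fun s => C * f s) d x := by
  obtain ⟨d, hd, hda⟩ := h
  exact ⟨C * d, mul_neg_of_pos_of_neg hC (neg_of_mul_pos_left hda ha.le), hd.const_mul C⟩

lemma exists_pos_hasDerivAt_const_mul (hC : 0 < C) (h : ∃ d, HasDerivAt f d x ∧ 0 < d * a)
    (ha : 0 < a) : ∃ d > 0, HasDerivAt (fun s => C * f s) d x := by
  obtain ⟨d, hd, hda⟩ := h
  exact ⟨C * d, mul_pos hC (pos_of_mul_pos_left hda ha.le), hd.const_mul C⟩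

end SignOfDerivative

/-- Part 2 of Lemma 2 of the paper: near the origin, the asymptotic differences
`g0 = T̂_E⁰ − T̂_L⁰` and `g1 = T̂_E¹ − T̂_L¹` between the expected sample sizes of the
eavesdropper and the legitimate fusion center have the stated sign pattern of partial
derivatives on the regions `ψ1 > ψ0` and `ψ0 > ψ1`. -/
theorem stmt_18 (p : ℝ) (hp : 1 / 2 < p) (hp1 : p < 1) (q : ℝ) (hq : q = 1 - p)
    (αs βs : ℝ) (hαs : αs ∈ Set.Ioo (0 : ℝ) 1) (hβs : βs ∈ Set.Ioo (0 : ℝ) 1)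
    (H : ℝ → ℝ → ℝ)
    (hH : ∀ x y, H x y = x * Real.log (x / y) + (1 - x) * Real.log ((1 - x) / (1 - y)))
    (ptf qtf : ℝ → ℝ → ℝ)
    (hptf : ∀ x y, ptf x y = (1 - x - y) * p + x)
    (hqtf : ∀ x y, qtf x y = (1 - x - y) * q + x)
    (g0 g1 : ℝ → ℝ → ℝ)
    (hg0 : ∀ x y, g0 x y = Real.log (1 / βs) *
      (1 / ((1 - 2 * qtf x y) * Real.log (ptf x y / (1 - ptf x y)))
        - 1 / H (qtf x y) (ptf x y)))
    (hg1 : ∀ x y, g1 x y = Real.log (1 / αs) *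
      (1 / ((2 * ptf x y - 1) * Real.log ((1 - qtf x y) / qtf x y))
        - 1 / H (ptf x y) (qtf x y))) :
    ∃ ε > (0 : ℝ),
      (∀ ψ0 ψ1 : ℝ, 0 ≤ ψ0 → ψ0 < ψ1 → ψ1 < ε →
        (∃ d < (0 : ℝ), HasDerivAt (fun x => g0 x ψ1) d ψ0) ∧
        (∃ d > (0 : ℝ), HasDerivAt (fun y => g0 ψ0 y) d ψ1) ∧
        (∃ d < (0 : ℝ), HasDerivAt (fun x => g1 x ψ1) d ψ0) ∧
        (∃ d > (0 : ℝ), HasDerivAt (fun y => g1 ψ0 y) d ψ1)) ∧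
      (∀ ψ0 ψ1 : ℝ, 0 ≤ ψ1 → ψ1 < ψ0 → ψ0 < ε →
        (∃ d > (0 : ℝ), HasDerivAt (fun x => g0 x ψ1) d ψ0) ∧
        (∃ d < (0 : ℝ), HasDerivAt (fun y => g0 ψ0 y) d ψ1) ∧
        (∃ d > (0 : ℝ), HasDerivAt (fun x => g1 x ψ1) d ψ0) ∧
        (∃ d < (0 : ℝ), HasDerivAt (fun y => g1 ψ0 y) d ψ1)) := by
  subst hq
  have hC0 : 0 < log (1 / βs) := log_pos (one_lt_one_div hβs.1 hβs.2)
  have hC1 : 0 < log (1 / αs) := log_pos (one_lt_one_div hαs.1 hαs.2)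
  obtain rfl : g0 = fun x y => log (1 / βs) *
      sprtGap (encryptedProb p x y) (encryptedProb (1 - p) x y) := by
    ext x y
    simp only [hg0, hH, hptf, hqtf, sprtGap, binKL, logit, encryptedProb, one_div]
  obtain rfl : g1 = fun x y => log (1 / αs) *
      sprtGap (encryptedProb p y x) (encryptedProb (1 - p) y x) := by
    ext x y
    rw [encryptedProb_swap p x y, encryptedProb_swap (1 - p) x y, sub_sub_cancel, sprtGap,
      binKL_one_sub]
    simp only [hg1, hH, hptf, hqtf, binKL, logit, encryptedProb, sub_sub_cancel, one_div]
    ring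
  obtain ⟨ε, hε, hpartials⟩ := exists_sprtGap_encryptedProb_partials hp hp1
  refine ⟨ε, hε, fun ψ0 ψ1 h0 hlt hε1 => ?_, fun ψ0 ψ1 h1 hlt hε0 => ?_⟩
  · obtain ⟨hx, hy⟩ := hpartials ψ0 ψ1 h0 (by linarith) hlt.ne (by linarith) hε1
    obtain ⟨hx', hy'⟩ := hpartials ψ1 ψ0 (by linarith) h0 hlt.ne' hε1 (by linarith)
    exact ⟨exists_neg_hasDerivAt_const_mul hC0 hx (by linarith),
      exists_pos_hasDerivAt_const_mul hC0 hy (by linarith),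
      exists_neg_hasDerivAt_const_mul hC1 hy' (by linarith),
      exists_pos_hasDerivAt_const_mul hC1 hx' (by linarith)⟩
  · obtain ⟨hx, hy⟩ := hpartials ψ0 ψ1 (by linarith) h1 hlt.ne' hε0 (by linarith)
    obtain ⟨hx', hy'⟩ := hpartials ψ1 ψ0 h1 (by linarith) hlt.ne (by linarith) hε0
    exact ⟨exists_pos_hasDerivAt_const_mul hC0 hx (by linarith),
      exists_neg_hasDerivAt_const_mul hC0 hy (by linarith),
      exists_pos_hasDerivAt_const_mul hC1 hy' (by linarith),
      exists_neg_hasDerivAt_const_mul hC1 hx' (by linarith)⟩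
end
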